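/- arXiv:0801.4402 — 4 statements merged into one kernel-verified Lean document; each statement's English description precedes it below -/
import Mathlib

section
/- Let u be a unit quaternion and v a unit quaternion. The matrix M_{u⊗v} of x ↦ u x v̄ commutes appropriately with J = M_{1⊗j} (i.e., is symplectic) if and only if v j = j v, equivalently v = v₀ + v₂ j with v₀² + v₂² = 1. -/
open Matrix Quaternion

noncomputable def quatBasis : Module.Basis (Fin 4) ℝ (Quaternion ℝ) :=
  Module.Basis.ofEquivFun (QuaternionAlgebra.linearEquivTuple (-1 : ℝ) (0 : ℝ) (-1 : ℝ))

/-- The 4×4 real matrix of the ℝ-linear map `x ↦ p * x * star q` on ℍ ≅ ℝ⁴. -/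
noncomputable def quatM (p q : Quaternion ℝ) : Matrix (Fin 4) (Fin 4) ℝ :=
  LinearMap.toMatrix quatBasis quatBasis
    ((LinearMap.mulLeft ℝ p).comp (LinearMap.mulRight ℝ (star q)))

def qi : Quaternion ℝ := ⟨0, 1, 0, 0⟩
def qj : Quaternion ℝ := ⟨0, 0, 1, 0⟩
def qk : Quaternion ℝ := ⟨0, 0, 0, 1⟩

/-- Dot product of the imaginary (vector) parts of two quaternions. -/
def qdot (x y : Quaternion ℝ) : ℝ := x.imI * y.imI + x.imJ * y.imJ + x.imK * y.imK

/-- Cross product of the imaginary (vector) parts, as a pure quaternion. -/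
def qcross (x y : Quaternion ℝ) : Quaternion ℝ :=
  ⟨0, x.imJ * y.imK - x.imK * y.imJ, x.imK * y.imI - x.imI * y.imK,
    x.imI * y.imJ - x.imJ * y.imI⟩

/-!
The coordinate basis of ℍ is orthonormal, so transposing `quatM p q` is taking the adjoint of
`x ↦ p x q̄`, which is `x ↦ p̄ x q` because `re (a b) = re (b a)`. Hence
`(M_{u⊗v})ᵀ J M_{u⊗v} = M_{ūu ⊗ v̄jv} = M_{1 ⊗ v̄jv}`, which is `J = M_{1⊗j}` iff `v̄jv = j`,
i.e. iff `v` commutes with `j`. Comparing the `i`- and `k`-components of `vj` and `jv` shows that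
this means `v = v₀ + v₂ j`.
-/

lemma Quaternion.re_mul_comm (a b : Quaternion ℝ) : (a * b).re = (b * a).re := by
  simp only [Quaternion.re_mul]; ring

lemma Quaternion.mem_unitary_of_norm_eq_one {q : Quaternion ℝ} (hq : ‖q‖ = 1) :
    q ∈ unitary (Quaternion ℝ) := by
  have hnormSq : normSq q = 1 := by rw [normSq_eq_norm_mul_self, hq, mul_one]
  exact ⟨by rw [star_mul_self, hnormSq, coe_one], by rw [self_mul_star, hnormSq, coe_one]⟩

lemma quatBasis_eq :
    quatBasis = (OrthonormalBasis.ofRepr Quaternion.linearIsometryEquivTuple).toBasis :=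
  Module.Basis.repr_injective rfl

lemma adjoint_mulLeft_comp_mulRight (p q : Quaternion ℝ) :
    LinearMap.adjoint ((LinearMap.mulLeft ℝ p).comp (LinearMap.mulRight ℝ (star q))) =
      (LinearMap.mulLeft ℝ (star p)).comp (LinearMap.mulRight ℝ (star (star q))) := by
  refine ((LinearMap.eq_adjoint_iff _ _).2 fun x y => ?_).symm
  simp only [LinearMap.comp_apply, LinearMap.mulLeft_apply, LinearMap.mulRight_apply,
    Quaternion.inner_def, star_mul, star_star, mul_assoc]
  rw [Quaternion.re_mul_comm]
  simp only [mul_assoc]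

lemma quatM_transpose (p q : Quaternion ℝ) : (quatM p q)ᵀ = quatM (star p) (star q) := by
  rw [quatM, quatM, quatBasis_eq, ← Matrix.conjTranspose_eq_transpose_of_trivial,
    ← LinearMap.toMatrix_adjoint, adjoint_mulLeft_comp_mulRight]

lemma quatM_mul (p q r s : Quaternion ℝ) : quatM p q * quatM r s = quatM (p * r) (q * s) := by
  rw [quatM, quatM, quatM, ← LinearMap.toMatrix_mul]
  congr 1
  ext x : 1
  simp [mul_assoc]

lemma quatM_one_injective : Function.Injective (quatM 1) := fun a b h => by
  have h1 := LinearMap.congr_fun ((LinearMap.toMatrix quatBasis quatBasis).injective h) 1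
  simpa using h1

lemma mul_qj_eq_qj_mul_iff (v : Quaternion ℝ) :
    v * qj = qj * v ↔ v.imI = 0 ∧ v.imK = 0 := by
  constructor
  · intro h
    have hI := congrArg QuaternionAlgebra.imI h
    have hK := congrArg QuaternionAlgebra.imK h
    simp only [Quaternion.imI_mul, Quaternion.imK_mul] at hI hK
    simp only [qj] at hI hK
    constructor <;> linarith
  · rintro ⟨hI, hK⟩
    ext <;>
      simp only [Quaternion.re_mul, Quaternion.imI_mul, Quaternion.imJ_mul, Quaternion.imK_mul] <;>
      simp only [qj, hI, hK] <;> ring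

theorem stmt_12 (u v : Quaternion ℝ) (hu : ‖u‖ = 1) (hv : ‖v‖ = 1) :
    ((quatM u v)ᵀ * quatM 1 qj * quatM u v = quatM 1 qj ↔ v * qj = qj * v) ∧
    (v * qj = qj * v ↔ v.imI = 0 ∧ v.imK = 0 ∧ v.re ^ 2 + v.imJ ^ 2 = 1) := by
  have hu' := Quaternion.mem_unitary_of_norm_eq_one hu
  have hv' := Quaternion.mem_unitary_of_norm_eq_one hv
  refine ⟨?_, ?_⟩
  · rw [quatM_transpose, quatM_mul, quatM_mul, mul_one, Unitary.star_mul_self_of_mem hu',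
      quatM_one_injective.eq_iff, ← commute_unitary_iff_star_left_conjugate hv', commute_iff_eq]
  · have hnormSq : v.re ^ 2 + v.imI ^ 2 + v.imJ ^ 2 + v.imK ^ 2 = 1 := by
      rw [← normSq_def', normSq_eq_norm_mul_self, hv, mul_one]
    rw [mul_qj_eq_qj_mul_iff]
    exact ⟨fun ⟨hI, hK⟩ => ⟨hI, hK, by simpa [hI, hK] using hnormSq⟩,
      fun ⟨hI, hK, _⟩ => ⟨hI, hK⟩⟩
end

section
/- Under the conditions of the symmetric symplectic quaternion representation, the expansion of XᵀJ₄X is (a² − p·p + q·q − r·r) M_{1⊗j} + M_{(2 r×p − 2aq)⊗1} + (2 p·q) M_{1⊗i} + (2 r·q) M_{1⊗k}, where X = a M_{1⊗1} + M_{p⊗i} + M_{q⊗j} + M_{r⊗k}. -/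
open Matrix Quaternion

/-!
With respect to the orthonormal basis `1, i, j, k` of `ℍ`, `M_{x⊗y}` is the matrix of
`z ↦ x z ȳ`. Taking matrices is then a ⋆-algebra isomorphism from `End ℍ`, and the adjoint of
`z ↦ x z ȳ` is `z ↦ x̄ z y`, so `Xᵀ J₄ X` is the matrix of an explicit composite of such maps.
Comparing it with the right-hand side is a polynomial identity in the coordinates of `z`.
-/

open LinearMap

noncomputable def quatOrthonormalBasis : OrthonormalBasis (Fin 4) ℝ ℍ :=
  OrthonormalBasis.ofRepr linearIsometryEquivTuple

lemma quatOrthonormalBasis_toBasis : quatOrthonormalBasis.toBasis = quatBasis :=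
  Module.Basis.eq_ofRepr_eq_repr fun _ _ => rfl

lemma quatM_eq_toMatrixOrthonormal (x y : ℍ) :
    quatM x y =
      toMatrixOrthonormal quatOrthonormalBasis (mulLeft ℝ x * mulRight ℝ (star y)) := by
  rw [quatM, ← quatOrthonormalBasis_toBasis]
  rfl

lemma star_mulLeft_mul_mulRight (x y : ℍ) :
    star (mulLeft ℝ x * mulRight ℝ y) = mulLeft ℝ (star x) * mulRight ℝ (star y) := by
  rw [star_eq_adjoint, eq_comm, eq_adjoint_iff]
  intro z w
  simp only [inner_def, Module.End.mul_apply, mulLeft_apply, mulRight_apply, star_mul,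
    re_mul, imI_mul, imJ_mul, imK_mul, re_star, imI_star, imJ_star, imK_star]
  ring

lemma quatM_transpose_s14 (x y : ℍ) : (quatM x y)ᵀ = quatM (star x) (star y) := by
  rw [← conjTranspose_eq_transpose_of_trivial, ← star_eq_conjTranspose,
    quatM_eq_toMatrixOrthonormal, quatM_eq_toMatrixOrthonormal, ← map_star,
    star_mulLeft_mul_mulRight]

theorem stmt_14 (a : ℝ) (p q r : Quaternion ℝ)
    (hp : p.re = 0) (hq : q.re = 0) (hr : r.re = 0)
    (X : Matrix (Fin 4) (Fin 4) ℝ)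
    (hXdef : X = a • quatM 1 1 + quatM p qi + quatM q qj + quatM r qk) :
    Xᵀ * quatM 1 qj * X =
      (a ^ 2 - qdot p p + qdot q q - qdot r r) • quatM 1 qj +
        quatM ((2 : ℝ) • qcross r p - (2 * a) • q) 1 +
        (2 * qdot p q) • quatM 1 qi + (2 * qdot r q) • quatM 1 qk := by
  subst hXdef
  simp only [transpose_add, transpose_smul, quatM_transpose_s14]
  simp only [quatM_eq_toMatrixOrthonormal, ← map_smul, ← map_add, ← map_mul]
  congr 1
  ext z : 1
  simp only [Module.End.mul_apply, LinearMap.add_apply, LinearMap.smul_apply, mulLeft_apply,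
    mulRight_apply, star_one, one_mul, mul_one, star_star]
  -- `qi`, `qj`, `qk` and `qcross` are unfolded only after the coordinate lemmas have fired:
  -- those do not see through `star` and `•` of an anonymous constructor.
  ext <;> simp [qdot, hp, hq, hr] <;> simp [qi, qj, qk, qcross] <;> ring
end

section
/- Let X = a M_{1⊗1} + M_{p⊗i} + M_{q⊗j} + M_{r⊗k} be a real symmetric symplectic 4×4 matrix (so a q = r×p, p·q = r·q = 0, a² − p·p + q·q − r·r = 1). Then the characteristic polynomial of X is x⁴ − 4a x³ + (4a² − 4 q·q + 2) x² − 4a x + 1. -/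
/-!
In the basis `1, i, j, k` the matrix `X` is symmetric with entries linear in `a` and the
coordinates of `p, q, r`, so each coefficient of its characteristic polynomial (trace, sums of
principal `2 × 2` and `3 × 3` minors, determinant) is a polynomial in these coordinates, which the
constraints reduce to the claimed value. The trace is `4a`; the `x²`-coefficient is
`((Tr X)² - Tr X²) / 2` with `Tr X² = 8a² + 8 q·q - 4`; the `x`-coefficient equals the trace and
the determinant is `1` because the characteristic polynomial of a symplectic matrix is palindromic.
-/

open Matrix Quaternion

open Polynomial

lemma quatBasis_repr (z : Quaternion ℝ) : quatBasis.repr z = ![z.re, z.imI, z.imJ, z.imK] := rfl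

lemma quatBasis_eq_s15 : ⇑quatBasis = ![1, qi, qj, qk] := by
  funext i
  apply quatBasis.repr.injective
  ext k
  rw [Module.Basis.repr_self, quatBasis_repr]
  fin_cases i <;> fin_cases k <;> simp [qi, qj, qk]

lemma quatM_eq (x y : Quaternion ℝ) : quatM x y =
    !![x.re*y.re + x.imI*y.imI + x.imJ*y.imJ + x.imK*y.imK,
       x.re*y.imI - x.imI*y.re - x.imJ*y.imK + x.imK*y.imJ,
       x.re*y.imJ + x.imI*y.imK - x.imJ*y.re - x.imK*y.imI,
       x.re*y.imK - x.imI*y.imJ + x.imJ*y.imI - x.imK*y.re;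
       -x.re*y.imI + x.imI*y.re - x.imJ*y.imK + x.imK*y.imJ,
       x.re*y.re + x.imI*y.imI - x.imJ*y.imJ - x.imK*y.imK,
       -x.re*y.imK + x.imI*y.imJ + x.imJ*y.imI - x.imK*y.re,
       x.re*y.imJ + x.imI*y.imK + x.imJ*y.re + x.imK*y.imI;
       -x.re*y.imJ + x.imI*y.imK + x.imJ*y.re - x.imK*y.imI,
       x.re*y.imK + x.imI*y.imJ + x.imJ*y.imI + x.imK*y.re,
       x.re*y.re - x.imI*y.imI + x.imJ*y.imJ - x.imK*y.imK,
       -x.re*y.imI - x.imI*y.re + x.imJ*y.imK + x.imK*y.imJ;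
       -x.re*y.imK - x.imI*y.imJ + x.imJ*y.imI + x.imK*y.re,
       -x.re*y.imJ + x.imI*y.imK - x.imJ*y.re + x.imK*y.imI,
       x.re*y.imI + x.imI*y.re + x.imJ*y.imK + x.imK*y.imJ,
       x.re*y.re - x.imI*y.imI - x.imJ*y.imJ + x.imK*y.imK] := by
  ext i j
  rw [quatM, LinearMap.toMatrix_apply, LinearMap.comp_apply, LinearMap.mulLeft_apply,
    LinearMap.mulRight_apply, quatBasis_eq_s15, quatBasis_repr]
  fin_cases i <;> fin_cases j <;>
    simp only [re_mul, imI_mul, imJ_mul, imK_mul, re_star, imI_star, imJ_star, imK_star] <;>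
    simp [qi, qj, qk] <;> ring

lemma Fin.sum_sum_Ioi_four {M : Type*} [AddCommMonoid M] (f : Fin 4 → Fin 4 → M) :
    ∑ i, ∑ j ∈ Finset.Ioi i, f i j = f 0 1 + f 0 2 + f 0 3 + f 1 2 + f 1 3 + f 2 3 := by
  have h0 : Finset.Ioi (0 : Fin 4) = {1, 2, 3} := by decide
  have h1 : Finset.Ioi (1 : Fin 4) = {2, 3} := by decide
  have h2 : Finset.Ioi (2 : Fin 4) = {3} := by decide
  have h3 : Finset.Ioi (3 : Fin 4) = ∅ := by decide
  simp [Fin.sum_univ_four, h0, h1, h2, h3, add_assoc]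

namespace Matrix

variable {R : Type*} [CommRing R]

lemma det_fin_four (A : Matrix (Fin 4) (Fin 4) R) :
    A.det = A 0 0 * A 1 1 * A 2 2 * A 3 3 - A 0 0 * A 1 1 * A 2 3 * A 3 2
      - A 0 0 * A 1 2 * A 2 1 * A 3 3 + A 0 0 * A 1 2 * A 2 3 * A 3 1
      + A 0 0 * A 1 3 * A 2 1 * A 3 2 - A 0 0 * A 1 3 * A 2 2 * A 3 1
      - A 0 1 * A 1 0 * A 2 2 * A 3 3 + A 0 1 * A 1 0 * A 2 3 * A 3 2
      + A 0 1 * A 1 2 * A 2 0 * A 3 3 - A 0 1 * A 1 2 * A 2 3 * A 3 0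
      - A 0 1 * A 1 3 * A 2 0 * A 3 2 + A 0 1 * A 1 3 * A 2 2 * A 3 0
      + A 0 2 * A 1 0 * A 2 1 * A 3 3 - A 0 2 * A 1 0 * A 2 3 * A 3 1
      - A 0 2 * A 1 1 * A 2 0 * A 3 3 + A 0 2 * A 1 1 * A 2 3 * A 3 0
      + A 0 2 * A 1 3 * A 2 0 * A 3 1 - A 0 2 * A 1 3 * A 2 1 * A 3 0
      - A 0 3 * A 1 0 * A 2 1 * A 3 2 + A 0 3 * A 1 0 * A 2 2 * A 3 1
      + A 0 3 * A 1 1 * A 2 0 * A 3 2 - A 0 3 * A 1 1 * A 2 2 * A 3 0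
      - A 0 3 * A 1 2 * A 2 0 * A 3 1 + A 0 3 * A 1 2 * A 2 1 * A 3 0 := by
  simp [det_succ_row_zero, Fin.sum_univ_succ, Fin.succAbove]
  ring

def principalMinorSum₂ (A : Matrix (Fin 4) (Fin 4) R) : R :=
  ∑ i, ∑ j ∈ Finset.Ioi i, (A i i * A j j - A i j * A j i)

def principalMinorSum₃ (A : Matrix (Fin 4) (Fin 4) R) : R :=
  ∑ i : Fin 4, (A.submatrix i.succAbove i.succAbove).det

lemma charpoly_fin_four (A : Matrix (Fin 4) (Fin 4) R) :
    A.charpoly = X ^ 4 - C A.trace * X ^ 3 + C A.principalMinorSum₂ * X ^ 2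
      - C A.principalMinorSum₃ * X + C A.det := by
  rw [charpoly, principalMinorSum₂, principalMinorSum₃, det_fin_four, det_fin_four, trace,
    Fin.sum_sum_Ioi_four]
  simp [Fin.sum_univ_four, det_fin_three, Fin.succAbove]
  ring

end Matrix

lemma components_of_smul_eq_qcross {a : ℝ} {p q r : Quaternion ℝ} (h : a • q = qcross r p) :
    a * q.imI = r.imJ * p.imK - r.imK * p.imJ ∧ a * q.imJ = r.imK * p.imI - r.imI * p.imK ∧
      a * q.imK = r.imI * p.imJ - r.imJ * p.imI := by
  obtain ⟨-, h1, h2, h3⟩ := QuaternionAlgebra.ext_iff.mp h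
  exact ⟨h1, h2, h3⟩

noncomputable def quatCombo (a : ℝ) (p q r : Quaternion ℝ) : Matrix (Fin 4) (Fin 4) ℝ :=
  a • quatM 1 1 + quatM p qi + quatM q qj + quatM r qk

section PureImaginary

variable (a : ℝ) {p q r : Quaternion ℝ} (hp : p.re = 0) (hq : q.re = 0) (hr : r.re = 0)
include hp hq hr

lemma quatCombo_eq : quatCombo a p q r =
    !![a + p.imI + q.imJ + r.imK, q.imK - r.imJ, r.imI - p.imK, p.imJ - q.imI;
       q.imK - r.imJ, a + p.imI - q.imJ - r.imK, p.imJ + q.imI, p.imK + r.imI;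
       r.imI - p.imK, p.imJ + q.imI, a - p.imI + q.imJ - r.imK, q.imK + r.imJ;
       p.imJ - q.imI, p.imK + r.imI, q.imK + r.imJ, a - p.imI - q.imJ + r.imK] := by
  rw [quatCombo, quatM_eq, quatM_eq, quatM_eq, quatM_eq]
  ext i j
  fin_cases i <;> fin_cases j <;> simp [qi, qj, qk, hp, hq, hr] <;> ring

lemma trace_quatCombo : (quatCombo a p q r).trace = 4 * a := by
  rw [quatCombo_eq a hp hq hr, trace, Fin.sum_univ_four]
  simp only [diag_apply, of_apply, cons_val', cons_val_zero, cons_val_fin_one, cons_val_one,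
    cons_val]
  ring

lemma principalMinorSum₂_quatCombo (h4 : a ^ 2 - qdot p p + qdot q q - qdot r r = 1) :
    (quatCombo a p q r).principalMinorSum₂ = 4 * a ^ 2 - 4 * qdot q q + 2 := by
  rw [quatCombo_eq a hp hq hr, principalMinorSum₂, Fin.sum_sum_Ioi_four]
  simp only [of_apply, cons_val', cons_val_zero, cons_val_fin_one, cons_val_one, cons_val]
  linear_combination (norm := (simp only [qdot]; ring1)) 2 * h4

lemma principalMinorSum₃_quatCombo (h1 : a • q = qcross r p)
    (h4 : a ^ 2 - qdot p p + qdot q q - qdot r r = 1) :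
    (quatCombo a p q r).principalMinorSum₃ = 4 * a := by
  obtain ⟨g1, g2, g3⟩ := components_of_smul_eq_qcross h1
  rw [quatCombo_eq a hp hq hr, principalMinorSum₃]
  simp [Fin.sum_univ_four, det_fin_three, Fin.succAbove]
  linear_combination (norm := (simp only [qdot]; ring1))
    4 * a * h4 - 8 * q.imI * g1 - 8 * q.imJ * g2 - 8 * q.imK * g3

lemma det_quatCombo (h1 : a • q = qcross r p) (h2 : qdot p q = 0) (h3 : qdot r q = 0)
    (h4 : a ^ 2 - qdot p p + qdot q q - qdot r r = 1) :
    (quatCombo a p q r).det = 1 := by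
  obtain ⟨g1, g2, g3⟩ := components_of_smul_eq_qcross h1
  rw [quatCombo_eq a hp hq hr, det_fin_four]
  simp only [of_apply, cons_val', cons_val_zero, cons_val_fin_one, cons_val_one, cons_val]
  linear_combination (norm := (simp only [qdot]; ring1))
    (a ^ 2 - qdot p p + qdot q q - qdot r r + 1) * h4
    - 4 * (a * q.imI - (r.imJ * p.imK - r.imK * p.imJ)) * g1
    - 4 * (a * q.imJ - (r.imK * p.imI - r.imI * p.imK)) * g2
    - 4 * (a * q.imK - (r.imI * p.imJ - r.imJ * p.imI)) * g3
    + 4 * qdot p q * h2 + 4 * qdot r q * h3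

end PureImaginary

open Polynomial in
theorem stmt_15 (a : ℝ) (p q r : Quaternion ℝ)
    (hp : p.re = 0) (hq : q.re = 0) (hr : r.re = 0)
    (h1 : a • q = qcross r p) (h2 : qdot p q = 0) (h3 : qdot r q = 0)
    (h4 : a ^ 2 - qdot p p + qdot q q - qdot r r = 1)
    (X : Matrix (Fin 4) (Fin 4) ℝ)
    (hXdef : X = a • quatM 1 1 + quatM p qi + quatM q qj + quatM r qk) :
    X.charpoly = Polynomial.X ^ 4 - C (4 * a) * Polynomial.X ^ 3 +
      C (4 * a ^ 2 - 4 * qdot q q + 2) * Polynomial.X ^ 2 -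
      C (4 * a) * Polynomial.X + 1 := by
  rw [hXdef, ← quatCombo, charpoly_fin_four, trace_quatCombo a hp hq hr,
    principalMinorSum₂_quatCombo a hp hq hr h4, principalMinorSum₃_quatCombo a hp hq hr h1 h4,
    det_quatCombo a hp hq hr h1 h2 h3 h4, C_1]
end

section
/- Let X ∈ Sp(4,ℝ). Then there exist at most two real matrices H that are simultaneously (i) symmetric, (ii) symplectic, (iii) of positive trace, and (iv) satisfy H² = XᵀX; and at least one such H exists, namely the unique positive definite square root of XᵀX. -/
open Matrix

/-- The standard 4×4 symplectic form matrix J = [[0, I], [-I, 0]]. -/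
def symplJ : Matrix (Fin 2 ⊕ Fin 2) (Fin 2 ⊕ Fin 2) ℝ :=
  Matrix.fromBlocks 0 1 (-1) 0

/-!
Existence: `S = XᵀX` is positive definite and symplectic, so `S⁻¹ = Jᵀ S J`. Taking positive
square roots, which commute with inversion and with conjugation by the orthogonal matrix `J`,
gives `P⁻¹ = Jᵀ P J` for `P = √S`, i.e. `P` is symplectic.

At most two: if `H` is symmetric and symplectic then `K = H + H⁻¹` is symmetric and commutes with
`J`, i.e. it is a Hermitian `2 × 2` matrix over `ℂ = ℝ[J]`, so it satisfies the quadratic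
Cayley–Hamilton relation `K² = (tr K / 2) K - det`. Multiplying it by `H²` gives, with
`S = H²` and `τ = tr H`, the relation `τ (S + 1) H = S² + ((τ² - tr S) / 2) S + 1`, so `H` is
determined by `S` and `τ`. Squaring this relation and taking traces shows that `τ²` is a root of a
quadratic with leading coefficient `tr (S²) / 4 > 0`; as `τ > 0`, there are at most two values
of `τ`.
-/

open SymplecticGroup

theorem exists_eq_or_eq_of_mul_self_add_mul_add_eq_zero {K : Type*} [Field K] {a : K} (b c : K)
    (ha : a ≠ 0) : ∃ r₁ r₂ : K, ∀ u, a * u * u + b * u + c = 0 → u = r₁ ∨ u = r₂ := by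
  by_cases hroot : ∃ r, a * r * r + b * r + c = 0
  · obtain ⟨r, hr⟩ := hroot
    refine ⟨r, -b / a - r, fun u hu => ?_⟩
    have hs : a * (-b / a - r) = -b - a * r := by field_simp
    have hfac : a * ((u - r) * (u - (-b / a - r))) = 0 := by
      linear_combination hu - hr - (u - r) * hs
    rcases mul_eq_zero.mp ((mul_eq_zero.mp hfac).resolve_left ha) with h | h
    · exact .inl (sub_eq_zero.mp h)
    · exact .inr (sub_eq_zero.mp h)
  · exact ⟨0, 0, fun u hu => absurd ⟨u, hu⟩ hroot⟩

theorem symplJ_eq_neg_J : symplJ = -J (Fin 2) ℝ := by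
  rw [symplJ, J, fromBlocks_neg, neg_zero, neg_neg]

theorem transpose_mul_symplJ_mul_eq_iff {A : Matrix (Fin 2 ⊕ Fin 2) (Fin 2 ⊕ Fin 2) ℝ} :
    Aᵀ * symplJ * A = symplJ ↔ A ∈ symplecticGroup (Fin 2) ℝ := by
  rw [mem_iff', symplJ_eq_neg_J, Matrix.mul_neg, Matrix.neg_mul, neg_inj]

section SymmetricSymplectic

variable {l R : Type*} [Fintype l] [DecidableEq l] [CommRing R]
  {H : Matrix (l ⊕ l) (l ⊕ l) R}

theorem inv_eq_neg_J_mul_J_of_transpose_eq (hHt : Hᵀ = H) (hH : H ∈ symplecticGroup l R) :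
    H⁻¹ = -(J l R * H * J l R) := by
  rw [inv_eq_symplectic_inv H hH, hHt, Matrix.neg_mul, Matrix.neg_mul]

theorem trace_inv_eq_of_transpose_eq (hHt : Hᵀ = H) (hH : H ∈ symplecticGroup l R) :
    H⁻¹.trace = H.trace := by
  rw [inv_eq_neg_J_mul_J_of_transpose_eq hHt hH, trace_neg, trace_mul_cycle, J_squared,
    neg_one_mul, trace_neg, neg_neg]

theorem commute_add_inv_J_of_transpose_eq (hHt : Hᵀ = H) (hH : H ∈ symplecticGroup l R) :
    Commute (H + H⁻¹) (J l R) := by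
  have hJJ := J_squared l R
  rw [Commute, SemiconjBy, inv_eq_neg_J_mul_J_of_transpose_eq hHt hH]
  simp only [add_mul, mul_add, Matrix.neg_mul, Matrix.mul_neg, Matrix.mul_assoc, hJJ]
  simp only [← Matrix.mul_assoc, hJJ]
  noncomm_ring

end SymmetricSymplectic

section Sqrt

open scoped MatrixOrder

variable {l : Type*} [Fintype l] [DecidableEq l]

theorem mem_symplecticGroup_of_inv_eq {A : Matrix (l ⊕ l) (l ⊕ l) ℝ} (hA : IsUnit A)
    (hinv : A⁻¹ = (-J l ℝ) * Aᵀ * J l ℝ) : A ∈ symplecticGroup l ℝ := by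
  have hJ : J l ℝ * (-J l ℝ) = 1 := by rw [Matrix.mul_neg, J_squared, neg_neg]
  have h : A * J l ℝ * Aᵀ * J l ℝ = -1 := by
    rw [← neg_neg (A * J l ℝ * Aᵀ * J l ℝ),
      ← Matrix.mul_nonsing_inv A ((isUnit_iff_isUnit_det A).mp hA), hinv]
    simp only [Matrix.neg_mul, Matrix.mul_neg, Matrix.mul_assoc]
  rw [mem_iff]
  calc A * J l ℝ * Aᵀ = A * J l ℝ * Aᵀ * (J l ℝ * (-J l ℝ)) := by rw [hJ, Matrix.mul_one]
    _ = J l ℝ := by rw [← Matrix.mul_assoc, h, Matrix.neg_mul, Matrix.one_mul, neg_neg]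

theorem sqrt_mem_symplecticGroup {S : Matrix (l ⊕ l) (l ⊕ l) ℝ} (hS : S.PosDef)
    (hSp : S ∈ symplecticGroup l ℝ) : CFC.sqrt S ∈ symplecticGroup l ℝ := by
  set P := CFC.sqrt S
  have hP : P.PosDef := (IsStrictlyPositive.sqrt S hS.isStrictlyPositive).posDef
  have hSt : Sᵀ = S := hS.isHermitian
  have hPt : Pᵀ = P := hP.isHermitian
  have hJ : J l ℝ * (J l ℝ)ᵀ = 1 := by rw [J_transpose, Matrix.mul_neg, J_squared, neg_neg]
  have hconj : CFC.sqrt ((J l ℝ)ᵀ * S * J l ℝ) = (J l ℝ)ᵀ * P * J l ℝ := by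
    refine CFC.sqrt_unique ?_ ?_
    · calc (J l ℝ)ᵀ * P * J l ℝ * ((J l ℝ)ᵀ * P * J l ℝ)
          = (J l ℝ)ᵀ * (P * (J l ℝ * (J l ℝ)ᵀ) * P) * J l ℝ := by simp only [Matrix.mul_assoc]
        _ = (J l ℝ)ᵀ * S * J l ℝ := by
          rw [hJ, Matrix.mul_one, CFC.sqrt_mul_sqrt_self S hS.posSemidef.nonneg]
    · simpa using (hP.posSemidef.conjTranspose_mul_mul_same (J l ℝ)).nonneg
  refine mem_symplecticGroup_of_inv_eq hP.isUnit ?_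
  rw [hS.posSemidef.inv_sqrt, inv_eq_symplectic_inv S hSp, hSt, hPt, ← J_transpose, hconj]

theorem posDef_transpose_mul_self_of_mem {X : Matrix (l ⊕ l) (l ⊕ l) ℝ}
    (hX : X ∈ symplecticGroup l ℝ) : (Xᵀ * X).PosDef :=
  .conjTranspose_mul_self X
    (mulVec_injective_iff_isUnit.mpr ((isUnit_iff_isUnit_det X).mpr (symplectic_det hX)))

theorem exists_posDef_mem_symplecticGroup_mul_self_eq {X : Matrix (l ⊕ l) (l ⊕ l) ℝ}
    (hX : X ∈ symplecticGroup l ℝ) :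
    ∃ H, H.PosDef ∧ H ∈ symplecticGroup l ℝ ∧ H * H = Xᵀ * X := by
  have hS := posDef_transpose_mul_self_of_mem hX
  exact ⟨CFC.sqrt (Xᵀ * X), (IsStrictlyPositive.sqrt _ hS.isStrictlyPositive).posDef,
    sqrt_mem_symplecticGroup hS (mul_mem (transpose_mem hX) hX),
    CFC.sqrt_mul_sqrt_self _ hS.posSemidef.nonneg⟩

end Sqrt

noncomputable def sqrtWithTrace {n : Type*} [Fintype n] [DecidableEq n] (S : Matrix n n ℝ)
    (t : ℝ) : Matrix n n ℝ :=
  t⁻¹ • ((S + 1)⁻¹ * (S * S + ((t ^ 2 - S.trace) / 2) • S + 1))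

section Dim4

local notation "M₄" => Matrix (Fin 2 ⊕ Fin 2) (Fin 2 ⊕ Fin 2) ℝ

theorem mul_self_eq_of_transpose_eq_of_commute_J {K : M₄} (hK : Kᵀ = K)
    (hKJ : Commute K (J (Fin 2) ℝ)) :
    K * K = (K.trace / 2) • K - (K.trace ^ 2 / 8 - (K * K).trace / 4) • 1 := by
  -- The hypotheses force `K = fromBlocks A B (-B) A` with `A` symmetric and `B` skew.
  have hs : ∀ i j, K j i = K i j := fun i j => by
    simpa using congrFun (congrFun hK i) j
  have hc : ∀ i j, (K * J (Fin 2) ℝ) i j = (J (Fin 2) ℝ * K) i j := fun i j => by rw [hKJ.eq]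
  have hc₀₀ := hc (.inl 0) (.inl 0)
  have hc₁₀ := hc (.inl 1) (.inl 0)
  have hc₁₁ := hc (.inl 1) (.inl 1)
  have hc₀₂ := hc (.inl 0) (.inr 0)
  have hc₀₃ := hc (.inl 0) (.inr 1)
  have hc₁₂ := hc (.inl 1) (.inr 0)
  have hc₁₃ := hc (.inl 1) (.inr 1)
  simp only [mul_apply, J, Fintype.sum_sum_type, fromBlocks_apply₁₁, fromBlocks_apply₁₂,
    fromBlocks_apply₂₁, fromBlocks_apply₂₂, Matrix.zero_apply, Matrix.neg_apply, one_apply,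
    Fin.sum_univ_two] at hc₀₀ hc₁₀ hc₁₁ hc₀₂ hc₀₃ hc₁₂ hc₁₃
  norm_num at hc₀₀ hc₁₀ hc₁₁ hc₀₂ hc₀₃ hc₁₂ hc₁₃
  rw [hs (.inr 0) (.inl 0)] at hc₀₀
  rw [hs (.inr 1) (.inl 1)] at hc₁₁
  have hK₂₀ : K (.inr 0) (.inl 0) = 0 := by linarith
  have hK₃₁ : K (.inr 1) (.inl 1) = 0 := by linarith
  have hK₀₂ : K (.inl 0) (.inr 0) = 0 := by rw [hs]; exact hK₂₀
  have hK₁₃ : K (.inl 1) (.inr 1) = 0 := by rw [hs]; exact hK₃₁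
  have hK₃₀ : K (.inr 1) (.inl 0) = K (.inl 0) (.inr 1) := hs _ _
  have hK₁₂ : K (.inl 1) (.inr 0) = -K (.inl 0) (.inr 1) := by rw [hc₁₀, hK₃₀]
  have hK₂₁ : K (.inr 0) (.inl 1) = -K (.inl 0) (.inr 1) := by rw [hs, hK₁₂]
  have hK₁₀ : K (.inl 1) (.inl 0) = K (.inl 0) (.inl 1) := hs _ _
  have hK₂₃ : K (.inr 0) (.inr 1) = K (.inl 0) (.inl 1) := hc₀₃.symm
  have hK₃₂ : K (.inr 1) (.inr 0) = K (.inl 0) (.inl 1) := by rw [← hc₁₂, hK₁₀]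
  ext (i | i) (j | j) <;> fin_cases i <;> fin_cases j <;>
    simp [mul_apply, trace, Fintype.sum_sum_type, Fin.sum_univ_two, one_apply, ← hc₀₂, ← hc₁₃,
      hK₂₀, hK₃₁, hK₀₂, hK₁₃, hK₃₀, hK₁₂, hK₂₁, hK₁₀, hK₂₃, hK₃₂] <;> ring

theorem trace_smul_mul_eq {H : M₄} (hHt : Hᵀ = H) (hH : H ∈ symplecticGroup (Fin 2) ℝ) :
    H.trace • ((H * H + 1) * H) =
      H * H * (H * H) + ((H.trace ^ 2 - (H * H).trace) / 2) • (H * H) + 1 := by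
  set K := H + H⁻¹ with hKdef
  have hdet : IsUnit H.det := symplectic_det hH
  have hK : K * K = (K.trace / 2) • K - (K.trace ^ 2 / 8 - (K * K).trace / 4) • 1 :=
    mul_self_eq_of_transpose_eq_of_commute_J (by rw [transpose_add, transpose_nonsing_inv, hHt])
      (commute_add_inv_J_of_transpose_eq hHt hH)
  have htrK : K.trace = 2 * H.trace := by
    rw [trace_add, trace_inv_eq_of_transpose_eq hHt hH]; ring
  have htrKK : (K * K).trace = 2 * (H * H).trace + 8 := by
    have hSinv : (H * H)⁻¹.trace = (H * H).trace :=
      trace_inv_eq_of_transpose_eq (by rw [transpose_mul, hHt]) (mul_mem hH hH)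
    have hKK : K * K = H * H + 2 • 1 + (H * H)⁻¹ := by
      rw [Matrix.mul_inv_rev, hKdef]
      simp only [add_mul, mul_add, mul_nonsing_inv _ hdet, nonsing_inv_mul _ hdet]
      abel
    rw [hKK, trace_add, trace_add, hSinv, trace_smul, trace_one, Fintype.card_sum,
      Fintype.card_fin]
    norm_num
    ring
  have hKH : K * H = H * H + 1 := by rw [hKdef, add_mul, nonsing_inv_mul _ hdet]
  have hKKS : K * K * (H * H) = (H * H + 1) * (H * H + 1) :=
    calc K * K * (H * H) = K * (K * H) * H := by simp only [Matrix.mul_assoc]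
      _ = K * H * (H * H) + K * H := by
        conv_lhs => rw [hKH]
        simp only [mul_add, add_mul, Matrix.mul_assoc, mul_one]
      _ = (H * H + 1) * (H * H + 1) := by rw [hKH, mul_add, mul_one]
  have := congrArg (· * (H * H)) hK
  simp only [Matrix.sub_mul, Matrix.smul_mul, Matrix.one_mul, hKKS] at this
  rw [htrK, htrKK, ← Matrix.mul_assoc K H H, hKH] at this
  simp only [mul_add, add_mul, mul_one, one_mul] at this ⊢
  linear_combination (norm := module) -this

theorem eq_sqrtWithTrace {H : M₄} (hHt : Hᵀ = H) (hH : H ∈ symplecticGroup (Fin 2) ℝ)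
    (hτ : H.trace ≠ 0) (hS : IsUnit (H * H + 1)) : H = sqrtWithTrace (H * H) H.trace := by
  rw [sqrtWithTrace, ← trace_smul_mul_eq hHt hH, Matrix.mul_smul, ← Matrix.mul_assoc,
    nonsing_inv_mul _ ((isUnit_iff_isUnit_det _).mp hS), Matrix.one_mul, smul_smul,
    inv_mul_cancel₀ hτ, one_smul]

theorem exists_trace_sq_quadratic_eq_zero (S : M₄) : ∃ b c : ℝ, ∀ H : M₄, Hᵀ = H →
    H ∈ symplecticGroup (Fin 2) ℝ → H * H = S →
      (S * S).trace / 4 * H.trace ^ 2 * H.trace ^ 2 + b * H.trace ^ 2 + c = 0 := by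
  obtain ⟨M, hM⟩ : ∃ M : M₄, M = S * S - (S.trace / 2) • S + 1 := ⟨_, rfl⟩
  refine ⟨(M * S).trace - (S * S * S).trace - 2 * (S * S).trace - S.trace, (M * M).trace,
    fun H hHt hH hHS => ?_⟩
  set u := H.trace ^ 2
  have hlin : H.trace • ((S + 1) * H) = M + (u / 2) • S := by
    rw [hM, ← hHS, trace_smul_mul_eq hHt hH]
    module
  have hsq : (M + (u / 2) • S) * (M + (u / 2) • S) = u • ((S + 1) * (S + 1) * S) := by
    rw [← hlin, smul_mul_smul, ← sq, ← hHS]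
    congr 1
    noncomm_ring
  have := congrArg trace hsq
  simp only [add_mul, mul_add, Matrix.smul_mul, Matrix.mul_smul, one_mul, mul_one, trace_add,
    trace_smul, smul_eq_mul, trace_mul_comm S M] at this
  linear_combination this

theorem exists_eq_or_eq_of_mul_self_eq {S : M₄} (hS : S.PosDef) : ∃ A B : M₄, ∀ H : M₄, Hᵀ = H →
    H ∈ symplecticGroup (Fin 2) ℝ → 0 < H.trace → H * H = S → H = A ∨ H = B := by
  obtain ⟨b, c, hq⟩ := exists_trace_sq_quadratic_eq_zero S
  have hSS : (S * S).PosDef := by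
    have hSt : Sᵀ = S := hS.isHermitian
    simpa [hSt] using PosDef.conjTranspose_mul_self S (mulVec_injective_iff_isUnit.mpr hS.isUnit)
  obtain ⟨r₁, r₂, hr⟩ := exists_eq_or_eq_of_mul_self_add_mul_add_eq_zero b c
    (div_pos hSS.trace_pos four_pos).ne'
  refine ⟨sqrtWithTrace S √r₁, sqrtWithTrace S √r₂, fun H hHt hH hτ hHS => ?_⟩
  have hHeq := eq_sqrtWithTrace hHt hH hτ.ne' (hHS ▸ (hS.add_posSemidef .one).isUnit)
  rw [hHS] at hHeq
  rcases hr _ (hq H hHt hH hHS) with h | h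
  · exact .inl (hHeq.trans (by rw [← h, Real.sqrt_sq hτ.le]))
  · exact .inr (hHeq.trans (by rw [← h, Real.sqrt_sq hτ.le]))

end Dim4

theorem stmt_19 (X : Matrix (Fin 2 ⊕ Fin 2) (Fin 2 ⊕ Fin 2) ℝ)
    (hX : Xᵀ * symplJ * X = symplJ) :
    (∃ H : Matrix (Fin 2 ⊕ Fin 2) (Fin 2 ⊕ Fin 2) ℝ,
      Hᵀ = H ∧ Hᵀ * symplJ * H = symplJ ∧ 0 < H.trace ∧ H * H = Xᵀ * X ∧ H.PosDef) ∧
    ∃ A B : Matrix (Fin 2 ⊕ Fin 2) (Fin 2 ⊕ Fin 2) ℝ,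
      ∀ H : Matrix (Fin 2 ⊕ Fin 2) (Fin 2 ⊕ Fin 2) ℝ,
        Hᵀ = H → Hᵀ * symplJ * H = symplJ → 0 < H.trace → H * H = Xᵀ * X →
          H = A ∨ H = B := by
  rw [transpose_mul_symplJ_mul_eq_iff] at hX
  refine ⟨?_, ?_⟩
  · obtain ⟨H, hHpd, hH, hHH⟩ := exists_posDef_mem_symplecticGroup_mul_self_eq hX
    exact ⟨H, hHpd.isHermitian, transpose_mul_symplJ_mul_eq_iff.mpr hH, hHpd.trace_pos, hHH,
      hHpd⟩
  · obtain ⟨A, B, hAB⟩ := exists_eq_or_eq_of_mul_self_eq (posDef_transpose_mul_self_of_mem hX)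
    exact ⟨A, B, fun H hHt hH => hAB H hHt (transpose_mul_symplJ_mul_eq_iff.mp hH)⟩
end
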